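/- arXiv:1606.02685 — 4 statements merged into one kernel-verified Lean document; each statement's English description precedes it below -/
import Mathlib

section
/- Let d ≥ 1, let W be a d×d complex matrix, and let u ∈ ℂ^d and θ ∈ ℝ satisfy W·u = e^{iθ}·u. Define U₀ := |+⟩⟨+| ⊗ 𝟙_d + |−⟩⟨−| ⊗ W, a 2d×2d matrix, where ⊗ is the Kronecker product. Then for every v ∈ ℂ², U₀·(v ⊗ u) = e^{iθ/2} · (R₀(θ)·v) ⊗ u, where v ⊗ u is the Kronecker product of vectors. -/
/-!
On product vectors `v ⊗ u` with `W u = e^{iθ} u`, the operator `U₀` acts as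
`(|+⟩⟨+| + e^{iθ} |−⟩⟨−|) ⊗ 𝟙`, and the 2×2 matrix `|+⟩⟨+| + e^{iθ} |−⟩⟨−|` equals
`e^{iθ/2} R₀(θ)`: both have eigenvalue `1` on `|+⟩` and `e^{iθ}` on `|−⟩`.
-/

open Real Complex Matrix Kronecker

noncomputable def Rot (φ θ : ℝ) : Matrix (Fin 2) (Fin 2) ℂ :=
  !![(Real.cos (θ/2) : ℂ), -Complex.I * Complex.exp (-Complex.I * φ) * Real.sin (θ/2);
     -Complex.I * Complex.exp (Complex.I * φ) * Real.sin (θ/2), (Real.cos (θ/2) : ℂ)]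

noncomputable def ketPlus : Fin 2 → ℂ := ![(1 / Real.sqrt 2 : ℝ), (1 / Real.sqrt 2 : ℝ)]
noncomputable def ketMinus : Fin 2 → ℂ := ![(1 / Real.sqrt 2 : ℝ), (-(1 / Real.sqrt 2) : ℝ)]

/-- The rank-one projection `|+⟩⟨+|`. -/
noncomputable def projPlus : Matrix (Fin 2) (Fin 2) ℂ := vecMulVec ketPlus (star ketPlus)
/-- The rank-one projection `|−⟩⟨−|`. -/
noncomputable def projMinus : Matrix (Fin 2) (Fin 2) ℂ := vecMulVec ketMinus (star ketMinus)

/-- Kronecker product of vectors. -/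
def vecKron {d : ℕ} (v : Fin 2 → ℂ) (u : Fin d → ℂ) : Fin 2 × Fin d → ℂ :=
  fun p => v p.1 * u p.2

lemma kronecker_mulVec_vecKron {d : ℕ} (A : Matrix (Fin 2) (Fin 2) ℂ)
    (B : Matrix (Fin d) (Fin d) ℂ) (v : Fin 2 → ℂ) (u : Fin d → ℂ) :
    (A ⊗ₖ B).mulVec (vecKron v u) = vecKron (A.mulVec v) (B.mulVec u) := by
  funext ⟨i, j⟩
  simp only [mulVec, dotProduct, vecKron, Fintype.sum_prod_type, kroneckerMap_apply,
    Finset.sum_mul_sum]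
  exact Finset.sum_congr rfl fun k _ => Finset.sum_congr rfl fun l _ => by ring

lemma vecKron_add_smul_right {d : ℕ} (v w : Fin 2 → ℂ) (c : ℂ) (u : Fin d → ℂ) :
    vecKron v u + vecKron w (c • u) = vecKron (v + c • w) u := by
  funext p
  simp only [vecKron, Pi.add_apply, Pi.smul_apply, smul_eq_mul]
  ring

lemma smul_vecKron {d : ℕ} (c : ℂ) (v : Fin 2 → ℂ) (u : Fin d → ℂ) :
    c • vecKron v u = vecKron (c • v) u := by
  funext p
  simp only [vecKron, Pi.smul_apply, smul_eq_mul]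
  ring

lemma inv_sqrt_two_mul_self : ((√2 : ℝ) : ℂ)⁻¹ * ((√2 : ℝ) : ℂ)⁻¹ = 2⁻¹ := by
  rw [← mul_inv, ← Complex.ofReal_mul, Real.mul_self_sqrt zero_le_two]
  norm_num

lemma projPlus_eq : projPlus = !![1/2, 1/2; 1/2, 1/2] := by
  ext i j
  fin_cases i <;> fin_cases j <;>
    simp [projPlus, ketPlus, vecMulVec_apply, inv_sqrt_two_mul_self]

lemma projMinus_eq : projMinus = !![1/2, -(1/2); -(1/2), 1/2] := by
  ext i j
  fin_cases i <;> fin_cases j <;>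
    simp [projMinus, ketMinus, vecMulVec_apply, inv_sqrt_two_mul_self]

/-- Writing `z = e^{iθ/2} = cos(θ/2) + i sin(θ/2)`, the entries `(1 ± z²)/2` factor as
`z cos(θ/2)` and `-i z sin(θ/2)`. -/
lemma projPlus_add_exp_smul_projMinus (θ : ℝ) :
    projPlus + Complex.exp (Complex.I * θ) • projMinus =
      Complex.exp (Complex.I * θ / 2) • Rot 0 θ := by
  set c : ℂ := ((Real.cos (θ / 2) : ℝ) : ℂ)
  set s : ℂ := ((Real.sin (θ / 2) : ℝ) : ℂ)
  have half_angle : Complex.exp (Complex.I * θ / 2) = c + s * Complex.I := by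
    rw [show Complex.I * θ / 2 = ((θ / 2 : ℝ) : ℂ) * Complex.I by push_cast; ring,
      Complex.exp_mul_I, ← Complex.ofReal_cos, ← Complex.ofReal_sin]
  have full_angle : Complex.exp (Complex.I * θ) = (c + s * Complex.I) ^ 2 := by
    rw [← half_angle, ← Complex.exp_nat_mul]
    ring_nf
  have pythagoras : s ^ 2 + c ^ 2 = 1 := by
    simp only [c, s]
    exact_mod_cast Real.sin_sq_add_cos_sq (θ / 2)
  rw [projPlus_eq, projMinus_eq, full_angle, half_angle]
  ext i j
  fin_cases i <;> fin_cases j <;>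
    · simp only [Rot, one_div, smul_of, smul_cons, smul_eq_mul, mul_neg, smul_empty, Fin.zero_eta,
        Fin.mk_one, Fin.isValue, Matrix.add_apply, Matrix.smul_apply, of_apply, cons_val',
        cons_val_zero, cons_val_one, cons_val_fin_one, ofReal_zero, mul_zero, Complex.exp_zero,
        mul_one, neg_mul]
      linear_combination (-1/2 : ℂ) * pythagoras + (s ^ 2 / 2) * Complex.I_sq

theorem U0_action_general (d : ℕ) (W : Matrix (Fin d) (Fin d) ℂ)
    (u : Fin d → ℂ) (θ : ℝ) (hu : W.mulVec u = Complex.exp (Complex.I * θ) • u) :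
    ∀ v : Fin 2 → ℂ,
      (projPlus ⊗ₖ (1 : Matrix (Fin d) (Fin d) ℂ) + projMinus ⊗ₖ W).mulVec (vecKron v u) =
        Complex.exp (Complex.I * θ / 2) • vecKron ((Rot 0 θ).mulVec v) u := by
  intro v
  rw [add_mulVec, kronecker_mulVec_vecKron, kronecker_mulVec_vecKron, one_mulVec, hu,
    vecKron_add_smul_right, ← smul_mulVec, ← add_mulVec, projPlus_add_exp_smul_projMinus,
    smul_mulVec, smul_vecKron]

theorem U0_action (d : ℕ) (hd : 1 ≤ d) (W : Matrix (Fin d) (Fin d) ℂ)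
    (u : Fin d → ℂ) (θ : ℝ) (hu : W.mulVec u = Complex.exp (Complex.I * θ) • u) :
    ∀ v : Fin 2 → ℂ,
      (projPlus ⊗ₖ (1 : Matrix (Fin d) (Fin d) ℂ) + projMinus ⊗ₖ W).mulVec (vecKron v u) =
        Complex.exp (Complex.I * θ / 2) • vecKron ((Rot 0 θ).mulVec v) u :=
  U0_action_general d W u θ hu
end

section
/- Let 0 < ε ≤ 1 and let A₁, B, C₁ : ℝ → ℝ satisfy, for all θ ∈ ℝ, A₁(θ)² + B(θ)² + C₁(θ)² ≤ 1 and A₁(θ)² + C₁(θ)² ≥ ((1−ε)/(1+ε))². Let δ ∈ ℝ satisfy cos δ = A₁(0) and A₁(0) ≥ (1−ε)/(1+ε). Then the function A₂(θ) := A₁(θ)·cos δ + B(θ)·sin δ satisfies |A₂(θ) − A₁(θ)| ≤ 6ε for all θ ∈ ℝ. -/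
/-!
With `c = (1 - ε) / (1 + ε)` we have `c ≤ cos δ ≤ 1`, so `A₁ (cos δ - 1)` is at most
`1 - c ≤ 2ε`. Both `B θ²` (from the two hypotheses on the squares) and `sin² δ = 1 - cos² δ`
are at most `1 - c² ≤ 4ε`, hence so is `|B θ sin δ|`.
-/

open Real

lemma one_sub_div_one_add_le {ε : ℝ} (hε : 0 ≤ ε) : 1 - (1 - ε) / (1 + ε) ≤ 2 * ε := by
  have h : 1 - (1 - ε) / (1 + ε) = 2 * ε / (1 + ε) := by field_simp; ring
  rw [h]
  exact div_le_self (by positivity) (by linarith)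

lemma one_sub_sq_div_one_add_le {ε : ℝ} (hε : 0 ≤ ε) :
    1 - ((1 - ε) / (1 + ε)) ^ 2 ≤ 4 * ε := by
  have h : 1 - ((1 - ε) / (1 + ε)) ^ 2 = 4 * ε / (1 + ε) ^ 2 := by field_simp; ring
  rw [h]
  exact div_le_self (by positivity) (one_le_pow₀ (by linarith))

lemma sin_sq_le_of_le_cos {c δ : ℝ} (hc : 0 ≤ c) (h : c ≤ cos δ) : sin δ ^ 2 ≤ 1 - c ^ 2 := by
  rw [sin_sq]
  linarith [pow_le_pow_left₀ hc h 2]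

lemma abs_mul_le_of_sq_le {x y K : ℝ} (hx : x ^ 2 ≤ K) (hy : y ^ 2 ≤ K) : |x * y| ≤ K := by
  have h := two_mul_le_add_sq |x| |y|
  rw [sq_abs, sq_abs] at h
  rw [abs_mul]
  linarith

lemma abs_mul_cos_add_mul_sin_sub_le {a b c δ : ℝ} (ha : a ^ 2 ≤ 1) (hb : b ^ 2 ≤ 1 - c ^ 2)
    (hc : 0 ≤ c) (hcδ : c ≤ cos δ) : |a * cos δ + b * sin δ - a| ≤ (1 - c) + (1 - c ^ 2) := by
  have ha' : |a| ≤ 1 := abs_le_one_iff_mul_self_le_one.mpr (by nlinarith)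
  have hcos : |cos δ - 1| ≤ 1 - c := by
    rw [abs_of_nonpos (sub_nonpos.mpr (cos_le_one δ))]
    linarith
  calc |a * cos δ + b * sin δ - a| = |a * (cos δ - 1) + b * sin δ| := by ring_nf
    _ ≤ |a| * |cos δ - 1| + |b * sin δ| := by rw [← abs_mul]; exact abs_add_le _ _
    _ ≤ 1 * (1 - c) + (1 - c ^ 2) := by
        gcongr
        exact abs_mul_le_of_sq_le hb (sin_sq_le_of_le_cos hc hcδ)
    _ = (1 - c) + (1 - c ^ 2) := by ring

theorem A2_close_to_A1 (ε : ℝ) (hε : 0 < ε) (hε1 : ε ≤ 1)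
    (A₁ B C₁ : ℝ → ℝ)
    (hbound : ∀ θ : ℝ, A₁ θ ^ 2 + B θ ^ 2 + C₁ θ ^ 2 ≤ 1)
    (hlower : ∀ θ : ℝ, ((1 - ε) / (1 + ε)) ^ 2 ≤ A₁ θ ^ 2 + C₁ θ ^ 2)
    (δ : ℝ) (hδ : Real.cos δ = A₁ 0) (hA0 : (1 - ε) / (1 + ε) ≤ A₁ 0) :
    ∀ θ : ℝ, |A₁ θ * Real.cos δ + B θ * Real.sin δ - A₁ θ| ≤ 6 * ε := by
  intro θ
  have hc : 0 ≤ (1 - ε) / (1 + ε) := div_nonneg (by linarith) (by linarith)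
  have hA : A₁ θ ^ 2 ≤ 1 := by nlinarith [hbound θ]
  have hB : B θ ^ 2 ≤ 1 - ((1 - ε) / (1 + ε)) ^ 2 := by linarith [hbound θ, hlower θ]
  calc |A₁ θ * cos δ + B θ * sin δ - A₁ θ|
      ≤ (1 - (1 - ε) / (1 + ε)) + (1 - ((1 - ε) / (1 + ε)) ^ 2) :=
        abs_mul_cos_add_mul_sin_sub_le hA hB hc (hδ ▸ hA0)
    _ ≤ 2 * ε + 4 * ε := add_le_add (one_sub_div_one_add_le hε.le) (one_sub_sq_div_one_add_le hε.le)
    _ = 6 * ε := by ring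
end

section
/- (Sum-of-squares completion.) Let n ≥ 0 and let A(θ) = Σ_{k=0}^{n} a_k cos(kθ) and C(θ) = Σ_{k=1}^{n} c_k sin(kθ) for real coefficients a_k, c_k, with A(θ)² + C(θ)² ≤ 1 for all θ ∈ ℝ. Then there exist real coefficients b₀, …, b_n and d₁, …, d_n such that B(θ) := Σ_{k=0}^{n} b_k cos(kθ) and D(θ) := Σ_{k=1}^{n} d_k sin(kθ) satisfy A(θ)² + B(θ)² + C(θ)² + D(θ)² = 1 for all θ ∈ ℝ. -/
/-!
Since `A` is even and `C` is odd, `1 - A² - C²` equals `p (cos θ)` for a polynomial `p` of degree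
at most `2n` that is nonnegative on `[-1, 1]` (write `A` and `C` in the Chebyshev bases
`T_k (cos θ)` and `sin θ · U_{k-1} (cos θ)`). It suffices to prove Lukács' representation
`p = s² + (1 - x²) τ²` with `deg s ≤ n`, `deg τ < n`, and to read `B = s (cos θ)`,
`D = sin θ · τ (cos θ)` back in those bases.

The substitution `x = (1 - y) / (1 + y)` turns `p` into `Q (y) = (1 + y)^(2n) p (x)`, nonnegative
on `[0, ∞)`. Every such `Q` is `S² + y T²`: the form is multiplicative, and `Q` splits off a factor
of this form for each of its roots (a linear one for a root `≤ 0`, the square of a linear one for a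
root `> 0`, which is a double root, and a quadratic one for a pair of conjugate roots). Comparing
leading coefficients bounds `deg S ≤ n`, `deg T < n`, and substituting back yields `s` and `τ`.
-/

open Polynomial Real Topology

namespace Polynomial.Sequence

lemma mem_degreeLT_iff_exists_sum {K : Type*} [Field K] (S : Sequence K) {m : ℕ} {p : K[X]} :
    p ∈ K[X]_m ↔ ∃ c : Fin m → K, ∑ k, c k • S k = p := by
  rw [← S.span_degreeLT fun i _ ↦ (leadingCoeff_ne_zero.2 (S.ne_zero i)).isUnit, ← Fin.range_val,
    ← Set.range_comp, Submodule.mem_span_range_iff_exists_fun]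
  rfl

end Polynomial.Sequence

namespace Polynomial.Chebyshev

noncomputable def chebyshevUsequence : Polynomial.Sequence ℝ where
  elems' n := U ℝ n
  degree_eq' := degree_U_natCast ℝ

end Polynomial.Chebyshev

lemma exists_cos_sum_iff_exists_eval_cos {m : ℕ} {f : ℝ → ℝ} :
    (∃ b : Fin m → ℝ, ∀ θ, f θ = ∑ k : Fin m, b k * cos ((k : ℕ) * θ)) ↔
      ∃ p ∈ ℝ[X]_m, ∀ θ, f θ = p.eval (cos θ) := by
  have eval_sum (c : Fin m → ℝ) (θ : ℝ) :
      (∑ k, c k • Chebyshev.T ℝ (k : ℕ)).eval (cos θ) = ∑ k : Fin m, c k * cos ((k : ℕ) * θ) := by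
    simp [eval_finsetSum, Chebyshev.T_real_cos]
  simp_rw [(Chebyshev.chebyshevTsequence ℝ).mem_degreeLT_iff_exists_sum]
  constructor
  · rintro ⟨b, hb⟩
    exact ⟨_, ⟨b, rfl⟩, fun θ ↦ by rw [hb, ← eval_sum]; rfl⟩
  · rintro ⟨_, ⟨c, rfl⟩, hc⟩
    exact ⟨c, fun θ ↦ by rw [hc, ← eval_sum]; rfl⟩

lemma exists_sin_sum_iff_exists_sin_mul_eval_cos {m : ℕ} {f : ℝ → ℝ} :
    (∃ d : Fin m → ℝ, ∀ θ, f θ = ∑ k : Fin m, d k * sin (((k : ℕ) + 1) * θ)) ↔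
      ∃ p ∈ ℝ[X]_m, ∀ θ, f θ = sin θ * p.eval (cos θ) := by
  have eval_sum (c : Fin m → ℝ) (θ : ℝ) : sin θ * (∑ k, c k • Chebyshev.U ℝ (k : ℕ)).eval (cos θ) =
      ∑ k : Fin m, c k * sin (((k : ℕ) + 1) * θ) := by
    simp only [eval_finsetSum, eval_smul, smul_eq_mul, Finset.mul_sum]
    refine Finset.sum_congr rfl fun k _ ↦ ?_
    rw [mul_comm (sin θ), mul_assoc, Chebyshev.U_real_cos]
    push_cast
    rfl
  simp_rw [Chebyshev.chebyshevUsequence.mem_degreeLT_iff_exists_sum]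
  constructor
  · rintro ⟨d, hd⟩
    exact ⟨_, ⟨d, rfl⟩, fun θ ↦ by rw [hd, ← eval_sum]; rfl⟩
  · rintro ⟨_, ⟨c, rfl⟩, hc⟩
    exact ⟨c, fun θ ↦ by rw [hc, ← eval_sum]; rfl⟩

/-- `(1 + X) ^ m * p ((1 - X) / (1 + X))` with the denominators cleared; it only sees the
coefficients of `p` up to degree `m`. -/
noncomputable def cayleyTransform {R : Type*} [CommRing R] (m : ℕ) (p : R[X]) : R[X] :=
  ∑ j ∈ Finset.range (m + 1), C (p.coeff j) * (1 - X) ^ j * (1 + X) ^ (m - j)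

section cayleyTransform

variable {R : Type*} [CommRing R]

lemma natDegree_cayleyTransform_le (m : ℕ) (p : R[X]) : (cayleyTransform m p).natDegree ≤ m := by
  refine natDegree_sum_le_of_forall_le _ _ fun j hj ↦ ?_
  have hj : j ≤ m := Finset.mem_range_succ_iff.1 hj
  refine natDegree_mul_le.trans ?_
  have h1 : ((1 - X : R[X]) ^ j).natDegree ≤ j := by compute_degree
  have h2 : ((1 + X : R[X]) ^ (m - j)).natDegree ≤ m - j := by compute_degree
  have := natDegree_C_mul_le (p.coeff j) ((1 - X) ^ j)
  omega

lemma eval_cayleyTransform {m : ℕ} {p : R[X]} (hp : p.natDegree ≤ m) {x y : R}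
    (h : 1 - x = (1 + x) * y) : (cayleyTransform m p).eval x = (1 + x) ^ m * p.eval y := by
  rw [cayleyTransform, eval_finsetSum, eval_eq_sum_range' (Nat.lt_succ_of_le hp), Finset.mul_sum]
  refine Finset.sum_congr rfl fun j hj ↦ ?_
  have hj : j ≤ m := Finset.mem_range_succ_iff.1 hj
  simp only [eval_mul, eval_C, eval_pow, eval_sub, eval_add, eval_one, eval_X]
  rw [h, mul_pow, ← Nat.add_sub_cancel' hj, pow_add, Nat.add_sub_cancel_left]
  ring

end cayleyTransform

def IsSqAddXMulSq {R : Type*} [CommSemiring R] (p : R[X]) : Prop :=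
  ∃ S T : R[X], p = S ^ 2 + X * T ^ 2

namespace IsSqAddXMulSq

lemma mul {R : Type*} [CommRing R] {p q : R[X]} (hp : IsSqAddXMulSq p) (hq : IsSqAddXMulSq q) :
    IsSqAddXMulSq (p * q) := by
  obtain ⟨S₁, T₁, rfl⟩ := hp
  obtain ⟨S₂, T₂, rfl⟩ := hq
  exact ⟨S₁ * S₂ - X * T₁ * T₂, S₁ * T₂ + S₂ * T₁, by ring⟩

lemma eval_nonneg {R : Type*} [CommRing R] [LinearOrder R] [IsStrictOrderedRing R] {p : R[X]}
    (hp : IsSqAddXMulSq p) {y : R} (hy : 0 ≤ y) : 0 ≤ p.eval y := by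
  obtain ⟨S, T, rfl⟩ := hp
  simp only [eval_add, eval_mul, eval_pow, eval_X]
  positivity

end IsSqAddXMulSq

lemma nonneg_of_mul_nonneg_on_Ici {m q : ℝ[X]} (hm : m ≠ 0) (hm_nonneg : ∀ y, 0 ≤ y → 0 ≤ m.eval y)
    (hmq : ∀ y, 0 ≤ y → 0 ≤ (m * q).eval y) (y : ℝ) (hy : 0 ≤ y) : 0 ≤ q.eval y := by
  have hm_ne : ∀ᶠ z in 𝓝[>] y, m.eval z ≠ 0 :=
    nhdsGT_le_nhdsNE y <| Filter.mem_of_superset (nhdsNE_of_nhdsNE_sdiff_finite Filter.univ_mem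
      (finite_setOfPred_isRoot hm).to_subtype) fun _ hz ↦ hz.2
  refine ge_of_tendsto (x := 𝓝[>] y) (q.continuous.tendsto y |>.mono_left nhdsWithin_le_nhds) ?_
  filter_upwards [hm_ne, self_mem_nhdsWithin] with z hz hyz
  have hz0 : 0 ≤ z := hy.trans (le_of_lt hyz)
  exact nonneg_of_mul_nonneg_right (by simpa using hmq z hz0) ((hm_nonneg z hz0).lt_of_ne' hz)

lemma sq_X_sub_C_dvd_of_isLocalMin {Q : ℝ[X]} {r : ℝ} (hr : Q.IsRoot r)
    (hmin : IsLocalMin (fun x ↦ Q.eval x) r) : (X - C r) ^ 2 ∣ Q := by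
  rcases eq_or_ne Q 0 with rfl | hQ
  · exact dvd_zero _
  rw [← le_rootMultiplicity_iff hQ]
  refine (one_lt_rootMultiplicity_iff_isRoot hQ).2 ⟨hr, ?_⟩
  simpa [Polynomial.deriv] using hmin.deriv_eq_zero

lemma exists_isSqAddXMulSq_dvd {Q : ℝ[X]} (hQ : ∀ y, 0 ≤ y → 0 ≤ Q.eval y)
    (hdeg : 0 < Q.natDegree) : ∃ m, IsSqAddXMulSq m ∧ 0 < m.natDegree ∧ m ∣ Q := by
  obtain ⟨z, hz⟩ := IsAlgClosed.exists_aeval_eq_zero ℂ Q (by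
    rw [degree_eq_natDegree (ne_zero_of_natDegree_gt hdeg)]; exact_mod_cast hdeg.ne')
  by_cases him : z.im = 0
  · have hroot : Q.IsRoot z.re := by
      rw [show z = algebraMap ℝ ℂ z.re from Complex.ext rfl (by simp [him]),
        aeval_algebraMap_apply_eq_algebraMap_eval] at hz
      simpa using hz
    rcases le_or_gt z.re 0 with hr | hr
    · refine ⟨X - C z.re, ⟨C √(-z.re), 1, ?_⟩, by simp, dvd_iff_isRoot.2 hroot⟩
      rw [← C_pow, sq_sqrt (neg_nonneg.2 hr), C_neg]
      ring
    · refine ⟨(X - C z.re) ^ 2, ⟨X - C z.re, 0, by ring⟩, by simp, ?_⟩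
      refine sq_X_sub_C_dvd_of_isLocalMin hroot ?_
      filter_upwards [Ici_mem_nhds hr] with y hy
      rw [hroot.eq_zero]
      exact hQ y hy
  · refine ⟨X ^ 2 - C (2 * z.re) * X + C (‖z‖ ^ 2),
      ⟨X - C ‖z‖, C √(2 * (‖z‖ - z.re)), ?_⟩, ?_,
      Q.quadratic_dvd_of_aeval_eq_zero_im_ne_zero hz him⟩
    · rw [← C_pow, sq_sqrt (by linarith [z.re_le_norm])]
      simp only [C_mul, C_sub, C_pow, map_ofNat]
      ring
    · rw [(isMonicOfDegree_sub_add_two _ _).natDegree_eq]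
      norm_num

theorem isSqAddXMulSq_of_nonneg {Q : ℝ[X]} (hQ : ∀ y, 0 ≤ y → 0 ≤ Q.eval y) :
    IsSqAddXMulSq Q := by
  induction hd : Q.natDegree using Nat.strong_induction_on generalizing Q with
  | _ d ih =>
  obtain rfl | hpos := Nat.eq_zero_or_pos d
  · rw [eq_C_of_natDegree_eq_zero hd]
    refine ⟨C √(Q.coeff 0), 0, ?_⟩
    rw [← C_pow, sq_sqrt (by simpa [coeff_zero_eq_eval_zero] using hQ 0 le_rfl)]
    simp
  obtain ⟨m, hm, hmdeg, q, rfl⟩ := exists_isSqAddXMulSq_dvd hQ (hd ▸ hpos)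
  have hm0 : m ≠ 0 := ne_zero_of_natDegree_gt hmdeg
  have hq0 : q ≠ 0 := by
    rintro rfl
    simp at hd
    omega
  have hqdeg : q.natDegree < d := by
    rw [← hd, natDegree_mul hm0 hq0]
    omega
  exact hm.mul (ih _ hqdeg (nonneg_of_mul_nonneg_on_Ici hm0 (fun y ↦ hm.eval_nonneg) hQ) rfl)

lemma mem_degreeLT_succ_iff {R : Type*} [Semiring R] {p : R[X]} {n : ℕ} :
    p ∈ R[X]_(n + 1) ↔ p.natDegree ≤ n := by
  rw [degreeLT_succ_eq_degreeLE, mem_degreeLE, natDegree_le_iff_degree_le]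

lemma degree_sq_add_X_mul_sq {K : Type*} [CommRing K] [LinearOrder K] [IsStrictOrderedRing K]
    (S T : K[X]) : (S ^ 2 + X * T ^ 2).degree = max (S ^ 2).degree (X * T ^ 2).degree := by
  by_cases h : S.leadingCoeff ^ 2 + T.leadingCoeff ^ 2 = 0
  · obtain ⟨hS, hT⟩ : S = 0 ∧ T = 0 := by
      simpa using (add_eq_zero_iff_of_nonneg (sq_nonneg _) (sq_nonneg _)).1 h
    simp [hS, hT]
  · exact degree_add_eq_of_leadingCoeff_add_ne_zero (by simpa [leadingCoeff_mul] using h)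

lemma mem_degreeLT_of_sq_add_X_mul_sq {K : Type*} [CommRing K] [LinearOrder K]
    [IsStrictOrderedRing K] {S T : K[X]} {n : ℕ} (h : (S ^ 2 + X * T ^ 2).natDegree ≤ 2 * n) :
    S ∈ K[X]_(n + 1) ∧ T ∈ K[X]_n := by
  rw [natDegree_le_iff_degree_le, degree_sq_add_X_mul_sq, max_le_iff,
    ← natDegree_le_iff_degree_le, ← natDegree_le_iff_degree_le, natDegree_pow] at h
  refine ⟨mem_degreeLT_succ_iff.2 (by omega), ?_⟩
  rcases eq_or_ne T 0 with rfl | hT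
  · exact zero_mem _
  rw [natDegree_mul X_ne_zero (pow_ne_zero 2 hT), natDegree_X, natDegree_pow] at h
  rw [mem_degreeLT, degree_eq_natDegree hT]
  exact_mod_cast (by omega : T.natDegree < n)

lemma natDegree_one_sub_sq_sub_one_sub_X_sq_mul_sq_le {R : Type*} [CommRing R] {n : ℕ}
    {s τ : R[X]} (hs : s ∈ R[X]_(n + 1)) (hτ : τ ∈ R[X]_n) :
    (1 - s ^ 2 - (1 - X ^ 2) * τ ^ 2).natDegree ≤ 2 * n := by
  have hs2 : (s ^ 2).natDegree ≤ 2 * n := natDegree_pow_le_of_le 2 (mem_degreeLT_succ_iff.1 hs)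
  have hτ2 : ((1 - X ^ 2) * τ ^ 2).natDegree ≤ 2 * n := by
    rcases eq_or_ne τ 0 with rfl | hτ0
    · simp
    have hτn := (natDegree_lt_iff_degree_lt hτ0).2 (mem_degreeLT.1 hτ)
    have h1X : ((1 : R[X]) - X ^ 2).natDegree ≤ 2 := by compute_degree
    have := natDegree_mul_le_of_le h1X (natDegree_pow_le_of_le 2 le_rfl : (τ ^ 2).natDegree ≤ _)
    omega
  refine (natDegree_sub_le_of_le (natDegree_sub_le_of_le natDegree_one.le hs2) hτ2).trans ?_
  simp

lemma eval_cayleyTransform_nonneg {m : ℕ} {p : ℝ[X]} (hdeg : p.natDegree ≤ m)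
    (hp : ∀ x ∈ Set.Icc (-1 : ℝ) 1, 0 ≤ p.eval x) {y : ℝ} (hy : 0 ≤ y) :
    0 ≤ (cayleyTransform m p).eval y := by
  have hy1 : 0 < 1 + y := by linarith
  rw [eval_cayleyTransform hdeg (y := (1 - y) / (1 + y)) (by field_simp)]
  refine mul_nonneg (by positivity) (hp _ ⟨?_, ?_⟩)
  · rw [le_div_iff₀ hy1]
    linarith
  · rw [div_le_one hy1]
    linarith

lemma eq_of_cayleyTransform_eq_sq_add_X_mul_sq {n : ℕ} {p S T : ℝ[X]}
    (hdeg : p.natDegree ≤ 2 * (n + 1)) (hS : S.natDegree ≤ n + 1) (hT : T.natDegree ≤ n)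
    (hST : cayleyTransform (2 * (n + 1)) p = S ^ 2 + X * T ^ 2) :
    p = (C (2 ^ (n + 1))⁻¹ * cayleyTransform (n + 1) S) ^ 2 +
      (1 - X ^ 2) * (C (2 ^ (n + 1))⁻¹ * cayleyTransform n T) ^ 2 := by
  refine eq_of_infinite_eval_eq _ _ <| (Set.Ioc_infinite (by norm_num : (-1 : ℝ) < 1)).mono ?_
  rintro x ⟨hx1, -⟩
  have hx : 1 + x ≠ 0 := by linarith
  obtain ⟨y, hxy⟩ : ∃ y, 1 - x = (1 + x) * y := ⟨(1 - x) / (1 + x), by field_simp⟩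
  have huv : (1 + x) * (1 + y) = 2 := by linear_combination -hxy
  have hQy := eval_cayleyTransform hdeg (show 1 - y = (1 + y) * x by linear_combination hxy)
  rw [hST] at hQy
  simp only [Set.mem_ofPred_eq, eval_add, eval_mul, eval_pow, eval_C, eval_sub, eval_one, eval_X,
    eval_cayleyTransform hS hxy, eval_cayleyTransform hT hxy] at hQy ⊢
  have hy : 1 + y ≠ 0 := right_ne_zero_of_mul (huv.trans_ne two_ne_zero)
  apply mul_left_cancel₀ (pow_ne_zero (2 * (n + 1)) hy)
  rw [← hQy, show 1 - x ^ 2 = (1 + x) ^ 2 * y by linear_combination (1 + x) * hxy]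
  calc _ = ((2 ^ (n + 1))⁻¹ * ((1 + x) ^ (n + 1) * (1 + y) ^ (n + 1))) ^ 2 *
        (S.eval y ^ 2 + y * T.eval y ^ 2) := by
        rw [← mul_pow, huv, inv_mul_cancel₀ (by positivity), one_pow, one_mul]
    _ = _ := by ring

theorem exists_eq_sq_add_one_sub_X_sq_mul_sq {n : ℕ} {p : ℝ[X]} (hdeg : p.natDegree ≤ 2 * n)
    (hp : ∀ x ∈ Set.Icc (-1 : ℝ) 1, 0 ≤ p.eval x) :
    ∃ s ∈ ℝ[X]_(n + 1), ∃ τ ∈ ℝ[X]_n, p = s ^ 2 + (1 - X ^ 2) * τ ^ 2 := by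
  obtain _ | n := n
  · have hc : 0 ≤ p.coeff 0 := by simpa [coeff_zero_eq_eval_zero] using hp 0 (by norm_num)
    refine ⟨C √(p.coeff 0), mem_degreeLT_succ_iff.2 (natDegree_C _).le, 0, zero_mem _, ?_⟩
    rw [← C_pow, sq_sqrt hc, ← eq_C_of_natDegree_le_zero hdeg]
    ring
  obtain ⟨S, T, hST⟩ := isSqAddXMulSq_of_nonneg fun _ ↦ eval_cayleyTransform_nonneg hdeg hp
  obtain ⟨hS, hT⟩ := mem_degreeLT_of_sq_add_X_mul_sq (hST ▸ natDegree_cayleyTransform_le _ p)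
  rw [mem_degreeLT_succ_iff] at hS hT
  have hmem (m : ℕ) (q : ℝ[X]) : C (2 ^ (n + 1))⁻¹ * cayleyTransform m q ∈ ℝ[X]_(m + 1) :=
    mem_degreeLT_succ_iff.2 ((natDegree_C_mul_le _ _).trans (natDegree_cayleyTransform_le m q))
  exact ⟨_, hmem _ S, _, hmem _ T, eq_of_cayleyTransform_eq_sq_add_X_mul_sq hdeg hS hT hST⟩

theorem sum_of_squares_completion (n : ℕ)
    (a : Fin (n + 1) → ℝ) (c : Fin n → ℝ) (A C : ℝ → ℝ)
    (hA : ∀ θ : ℝ, A θ = ∑ k : Fin (n + 1), a k * Real.cos ((k : ℕ) * θ))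
    (hC : ∀ θ : ℝ, C θ = ∑ k : Fin n, c k * Real.sin (((k : ℕ) + 1) * θ))
    (hbound : ∀ θ : ℝ, A θ ^ 2 + C θ ^ 2 ≤ 1) :
    ∃ (b : Fin (n + 1) → ℝ) (d : Fin n → ℝ),
      ∀ θ : ℝ,
        A θ ^ 2 + (∑ k : Fin (n + 1), b k * Real.cos ((k : ℕ) * θ)) ^ 2 +
          C θ ^ 2 + (∑ k : Fin n, d k * Real.sin (((k : ℕ) + 1) * θ)) ^ 2 = 1 := by
  obtain ⟨pA, hpA, hApA⟩ := exists_cos_sum_iff_exists_eval_cos.1 ⟨a, hA⟩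
  obtain ⟨pC, hpC, hCpC⟩ := exists_sin_sum_iff_exists_sin_mul_eval_cos.1 ⟨c, hC⟩
  have hp_eval (θ : ℝ) :
      (1 - pA ^ 2 - (1 - X ^ 2) * pC ^ 2).eval (cos θ) = 1 - A θ ^ 2 - C θ ^ 2 := by
    simp only [eval_sub, eval_one, eval_mul, eval_pow, eval_X, hApA, hCpC, ← sin_sq]
    ring
  have hp_nonneg (x : ℝ) (hx : x ∈ Set.Icc (-1 : ℝ) 1) :
      0 ≤ (1 - pA ^ 2 - (1 - X ^ 2) * pC ^ 2).eval x := by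
    rw [← cos_arccos hx.1 hx.2, hp_eval]
    linarith [hbound (arccos x)]
  obtain ⟨s, hs, τ, hτ, hsτ⟩ := exists_eq_sq_add_one_sub_X_sq_mul_sq
    (natDegree_one_sub_sq_sub_one_sub_X_sq_mul_sq_le hpA hpC) hp_nonneg
  obtain ⟨b, hb⟩ := exists_cos_sum_iff_exists_eval_cos.2 ⟨s, hs, fun θ ↦ rfl⟩
  obtain ⟨d, hd⟩ := exists_sin_sum_iff_exists_sin_mul_eval_cos.2 ⟨τ, hτ, fun θ ↦ rfl⟩
  refine ⟨b, d, fun θ ↦ ?_⟩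
  have := congrArg (eval (cos θ)) hsτ
  simp only [hp_eval, eval_add, eval_mul, eval_sub, eval_one, eval_pow, eval_X, ← sin_sq] at this
  rw [← hb, ← hd]
  linear_combination -this
end

section
/- (Additive query-count bound in the ε-dominated regime.) There exists a constant C > 0 such that for every τ ∈ ℝ with 0 ≤ τ ≤ 1 and every ε ∈ (0, 1/e²), there exists q ∈ ℕ with τ ≤ q − 1, 4·τ^q/(2^q·q!) ≤ ε, and q ≤ C · log(1/ε) / log(log(1/ε)). -/
/-!
Since `τ ≤ 1`, it suffices to make `4 / q!` at most `ε`. With `L = log (1/ε)`, the crude Stirling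
bound `q (log q - 1) ≤ log q!` (from `q^q / q! ≤ e^q`) shows that `q = ⌈4 L / log L⌉` already gives `q! ≥ e^{2L} = ε⁻²`,
and `4 ε² ≤ ε` because `ε < e⁻² < 1/4`.
-/

open Real
open scoped Nat

namespace Real

lemma log_le_self_div_two {x : ℝ} (hx : 0 < x) : log x ≤ x / 2 := by
  have h := log_le_sub_one_of_pos (half_pos hx)
  rw [log_div hx.ne' two_ne_zero] at h
  linarith [log_two_lt_d9]

lemma mul_log_sub_one_le_log_factorial (n : ℕ) : n * (log n - 1) ≤ log n ! := by
  rcases n.eq_zero_or_pos with rfl | hn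
  · simp
  have hn' : (0 : ℝ) < n := by exact_mod_cast hn
  have h := pow_div_factorial_le_exp _ hn'.le n
  rw [div_le_iff₀ (by positivity)] at h
  have h := log_le_log (by positivity) h
  rw [log_pow, log_mul (exp_pos _).ne' (by positivity), log_exp] at h
  linarith

/-- The choice `q ≥ 4 L / log L` makes `log q - 1 ≥ log L - log (log L) ≥ (log L) / 2`. -/
lemma two_mul_le_mul_log_sub_one {L q : ℝ} (hL : 1 < L) (hq : 4 * L / log L ≤ q) :
    2 * L ≤ q * (log q - 1) := by
  have hx : 0 < log L := log_pos hL
  have hLx : 0 < 4 * L / log L := by positivity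
  have hlog_q : log 4 + log L - log (log L) ≤ log q := by
    rw [← log_mul (by norm_num) (by linarith), ← log_div (by positivity) hx.ne']
    exact log_le_log hLx hq
  have hlog4 : 1 ≤ log 4 := by
    rw [le_log_iff_exp_le (by norm_num)]
    linarith [exp_one_lt_d9]
  have hhalf : log L / 2 ≤ log q - 1 := by
    linarith [log_le_self_div_two hx]
  calc 2 * L = 4 * L / log L * (log L / 2) := by field_simp; ring
    _ ≤ q * (log q - 1) := mul_le_mul hq hhalf (by positivity) (hLx.le.trans hq)

lemma exists_nat_le_div_log_and_exp_le_factorial {L : ℝ} (hL : 1 < L) :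
    ∃ q : ℕ, 4 ≤ (q : ℝ) ∧ exp (2 * L) ≤ q ! ∧ (q : ℝ) ≤ 5 * L / log L := by
  have hx : 0 < log L := log_pos hL
  have hxL : log L ≤ L := by linarith [log_le_sub_one_of_pos (zero_lt_one.trans hL)]
  have hLx : 1 ≤ L / log L := (one_le_div hx).2 hxL
  set q := ⌈4 * L / log L⌉₊
  have hq : 4 * L / log L ≤ q := Nat.le_ceil _
  refine ⟨q, by linarith [mul_div_assoc 4 L (log L)], ?_, ?_⟩
  · rw [← le_log_iff_exp_le (by exact_mod_cast q.factorial_pos)]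
    exact (two_mul_le_mul_log_sub_one hL hq).trans (mul_log_sub_one_le_log_factorial q)
  · have := Nat.ceil_lt_add_one (by positivity : 0 ≤ 4 * L / log L)
    linarith [mul_div_assoc 4 L (log L), mul_div_assoc 5 L (log L)]

end Real

theorem additive_query_count :
    ∃ C : ℝ, 0 < C ∧
      ∀ τ : ℝ, 0 ≤ τ → τ ≤ 1 →
        ∀ ε : ℝ, 0 < ε → ε < 1 / Real.exp 2 →
          ∃ q : ℕ, τ ≤ (q : ℝ) - 1 ∧
            4 * τ ^ q / (2 ^ q * (q.factorial : ℝ)) ≤ ε ∧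
            (q : ℝ) ≤ C * Real.log (1 / ε) / Real.log (Real.log (1 / ε)) := by
  refine ⟨5, by norm_num, fun τ hτ0 hτ1 ε hε hε_small => ?_⟩
  have hε_inv : exp 2 < 1 / ε := (lt_one_div (exp_pos 2) hε).2 hε_small
  have hL : 2 < log (1 / ε) := (lt_log_iff_exp_lt (by positivity)).2 hε_inv
  have hε_quarter : 4 * ε ≤ 1 := by
    have h : 4 ≤ exp 2 := by
      rw [show (2 : ℝ) = 1 + 1 by norm_num, exp_add]
      nlinarith [add_one_le_exp 1]
    rw [lt_div_iff₀ (exp_pos 2)] at hε_small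
    nlinarith
  obtain ⟨q, hq4, hfact, hq_le⟩ :=
    exists_nat_le_div_log_and_exp_le_factorial (by linarith : 1 < log (1 / ε))
  rw [two_mul, exp_add, exp_log (by positivity)] at hfact
  refine ⟨q, by linarith, ?_, hq_le⟩
  calc 4 * τ ^ q / (2 ^ q * (q.factorial : ℝ)) ≤ 4 / (1 / ε * (1 / ε)) := by
        refine div_le_div₀ (by norm_num) ?_ (by positivity) ?_
        · exact mul_le_of_le_one_right (by norm_num) (pow_le_one₀ hτ0 hτ1)
        · exact hfact.trans (le_mul_of_one_le_left (by positivity) (one_le_pow₀ one_le_two))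
    _ = 4 * ε * ε := by field_simp
    _ ≤ ε := mul_le_of_le_one_left hε.le hε_quarter
end
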